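/- Let A ⊊ B be fields with A ≠ B and let T = A + XB[X]. Then T is not a GCD-domain: there exist two elements of T (for instance X² and bX² for any b ∈ B ∖ A) which have no greatest common divisor in T, i.e., no common divisor of the two elements is divisible by every common divisor of them. -/

import Mathlib

/-- The composite `T = A + X B[X]` for a subfield `A` of a field `B`: the subring
(an integral domain) of the polynomial ring `B[X]` consisting of all polynomials
whose constant coefficient lies in `A`. -/
def fieldComposite (B : Type*) [Field B] (A : Subfield B) :
    Subring (Polynomial B) where
  carrier := {f | f.coeff 0 ∈ A}
  zero_mem' := by simpa using zero_mem A
  one_mem' := by simpa using one_mem A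
  add_mem' := fun hf hg => by
    simpa [Polynomial.coeff_add] using add_mem hf hg
  neg_mem' := fun hf => by
    simpa [Polynomial.coeff_neg] using neg_mem (s := A) hf
  mul_mem' := fun hf hg => by
    simpa [Polynomial.mul_coeff_zero] using mul_mem hf hg

/-!
Take `b ∈ B ∖ A` and suppose `d` is a greatest common divisor of `X²` and `bX²` in `T`.
For every `c ≠ 0` the element `cX ∈ T` divides both, hence divides `d` in `T`, so the
linear coefficient of `d` lies in `cA`; taking `c = 1` and `c = b` forces it to vanish,
and `X² ∣ d` in `B[X]`. On the other hand, writing `X² = d s` and `bX² = d s'` gives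
`s' = b s`, so `s(0)` and `b s(0)` both lie in `A`, forcing `s(0) = 0`. Then `X³ ∣ d s = X²`.
-/

open Polynomial

theorem Subfield.eq_zero_of_mul_mem {K : Type*} [Field K] {A : Subfield K} {a b : K}
    (hb : b ∉ A) (ha : a ∈ A) (hba : b * a ∈ A) : a = 0 := by
  by_contra ha0
  exact hb (by simpa [ha0] using A.mul_mem hba (A.inv_mem ha))

theorem Polynomial.mul_ne_X_sq_of_coeff_eq_zero {R : Type*} [CommSemiring R] [Nontrivial R]
    {d s : R[X]} (hd₀ : d.coeff 0 = 0) (hd₁ : d.coeff 1 = 0) (hs₀ : s.coeff 0 = 0) :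
    d * s ≠ X ^ 2 := by
  intro h
  have hd : X ^ 2 ∣ d := X_pow_dvd_iff.mpr fun n hn => by interval_cases n <;> assumption
  have hs : X ∣ s := X_dvd_iff.mpr hs₀
  have : (X : R[X]) ^ 3 ∣ X ^ 2 := by
    rw [← h, pow_succ]
    exact mul_dvd_mul hd hs
  simpa using X_pow_dvd_iff.mp this 2 (by norm_num)

namespace fieldComposite

variable {B : Type*} [Field B] {A : Subfield B}

theorem mem_iff {f : B[X]} : f ∈ fieldComposite B A ↔ f.coeff 0 ∈ A := Iff.rfl

theorem X_mul_mem (p : B[X]) : X * p ∈ fieldComposite B A := by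
  simp [mem_iff, A.zero_mem]

variable (A) in
noncomputable def xMul (p : B[X]) : fieldComposite B A := ⟨X * p, X_mul_mem p⟩

@[simp]
theorem coe_xMul (p : B[X]) : (xMul A p : B[X]) = X * p := rfl

theorem xMul_C_dvd_xMul_X_mul {c : B} (hc : c ≠ 0) (p : B[X]) :
    xMul A (C c) ∣ xMul A (X * p) := by
  refine ⟨xMul A (C c⁻¹ * p), Subtype.ext ?_⟩
  have hcc : C c * C c⁻¹ = 1 := by rw [← C_mul, mul_inv_cancel₀ hc, C_1]
  simp only [Subring.coe_mul, coe_xMul]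
  linear_combination (-X ^ 2 * p) * hcc

theorem coeff_of_xMul_C_dvd {c : B} {d : fieldComposite B A} (h : xMul A (C c) ∣ d) :
    (d : B[X]).coeff 0 = 0 ∧ ∃ a ∈ A, (d : B[X]).coeff 1 = c * a := by
  obtain ⟨r, rfl⟩ := h
  simp only [Subring.coe_mul, coe_xMul, mul_assoc, coeff_X_mul_zero, coeff_X_mul, coeff_C_mul]
  exact ⟨trivial, _, r.2, rfl⟩

theorem coeff_zero_eq_zero_of_mul_eq_xMul {b : B} (hb : b ∉ A) {p : B[X]} (hp : p ≠ 0)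
    {d s s' : fieldComposite B A} (hs : d * s = xMul A p) (hs' : d * s' = xMul A (p * C b)) :
    (s : B[X]).coeff 0 = 0 := by
  have hps : (d * s : B[X]) = X * p := congrArg Subtype.val hs
  have hps' : (d * s' : B[X]) = X * (p * C b) := congrArg Subtype.val hs'
  have hd : (d : B[X]) ≠ 0 := left_ne_zero_of_mul (hps ▸ mul_ne_zero X_ne_zero hp)
  have hs's : (s' : B[X]) = C b * s :=
    mul_left_cancel₀ hd (by rw [hps', mul_left_comm (d : B[X]), hps]; ring)
  exact Subfield.eq_zero_of_mul_mem hb s.2 (by simpa [hs's, mem_iff] using s'.2)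

end fieldComposite

open fieldComposite in
/-- Let `A ⊊ B` be fields with `A ≠ B` and let `T = A + X B[X]`.  Then
`T` is not a GCD-domain: there exist two elements of `T` which have no greatest common
divisor in `T`, i.e. no common divisor of the two elements is divisible by every
common divisor of them. -/
theorem fieldComposite_not_gcd_domain (B : Type*) [Field B] (A : Subfield B)
    (hA : A ≠ ⊤) :
    ∃ f g : fieldComposite B A,
      ¬ ∃ d : fieldComposite B A,
        d ∣ f ∧ d ∣ g ∧ ∀ e : fieldComposite B A, e ∣ f → e ∣ g → e ∣ d := by
  obtain ⟨b, hb⟩ := SetLike.exists_not_mem_of_ne_top A hA rfl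
  have hb₀ : b ≠ 0 := fun h => hb (h ▸ A.zero_mem)
  refine ⟨xMul A X, xMul A (X * C b), ?_⟩
  rintro ⟨d, ⟨s, hs⟩, ⟨s', hs'⟩, hd⟩
  have hs₀ := coeff_zero_eq_zero_of_mul_eq_xMul hb X_ne_zero hs.symm hs'.symm
  have hdvd : ∀ {c : B}, c ≠ 0 → xMul A (C c) ∣ d := fun hc =>
    hd _ (by simpa using xMul_C_dvd_xMul_X_mul hc 1) (xMul_C_dvd_xMul_X_mul hc _)
  obtain ⟨hd₀, a, ha, hd₁⟩ := coeff_of_xMul_C_dvd (hdvd one_ne_zero)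
  obtain ⟨-, a', ha', hd₁'⟩ := coeff_of_xMul_C_dvd (hdvd hb₀)
  have ha' : a' = 0 := Subfield.eq_zero_of_mul_mem hb ha' (by rwa [← hd₁', hd₁, one_mul])
  refine mul_ne_X_sq_of_coeff_eq_zero hd₀ (by rw [hd₁', ha', mul_zero]) hs₀ ?_
  simpa [pow_two] using congrArg Subtype.val hs.symm
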